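/- Let (γ_m)_{m∈ℤ} be a complex sequence, n an integer, and N ≥ 0 with the property that |γ_m| ≤ 4B/⟨2m⟩ for all |m| > N, where B > 0 and ⟨x⟩ = 1+|x|. Then for |n| > N, ∑_{m≠n, |m|>N} |γ_m|/|n−m| ≤ (2/⟨2N+2⟩)·(∑_{|m|>N} ⟨2m⟩²|γ_m|²)^{1/2}. -/

import Mathlib

/-! Write `⟨x⟩ = 1 + |x|`. Each term factors as `(1 / (⟨2m⟩ |n - m|)) · (⟨2m⟩ |γ_m|)`, so by
Cauchy–Schwarz it suffices to bound the sum of the squares of the first factors. On `|m| > N` the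
weight satisfies `⟨2m⟩ ≥ ⟨2N + 2⟩`, and `∑_{m ≠ n} 1 / (n - m)² ≤ ∑_{k ∈ ℤ} 1 / k² = π² / 3 ≤ 4`. -/

open Real

theorem tsum_mul_le_sqrt_mul_sqrt {ι : Type*} {f g : ι → ℝ} (hf : ∀ i, 0 ≤ f i)
    (hg : ∀ i, 0 ≤ g i) (hf2 : Summable fun i => f i ^ 2) (hg2 : Summable fun i => g i ^ 2) :
    ∑' i, f i * g i ≤ √(∑' i, f i ^ 2) * √(∑' i, g i ^ 2) := by
  have hfg : Summable fun i => f i * g i := by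
    refine .of_nonneg_of_le (fun i => mul_nonneg (hf i) (hg i)) (fun i => ?_)
      ((hf2.add hg2).div_const 2)
    nlinarith [sq_nonneg (f i - g i)]
  refine hfg.tsum_le_of_sum_le fun s => (Real.sum_mul_le_sqrt_mul_sqrt s f g).trans ?_
  gcongr
  · exact hf2.sum_le_tsum s fun i _ => sq_nonneg _
  · exact hg2.sum_le_tsum s fun i _ => sq_nonneg _

theorem hasSum_one_div_int_sq : HasSum (fun k : ℤ => 1 / (k : ℝ) ^ 2) (π ^ 2 / 3) := by
  have h : HasSum (fun n : ℕ => 1 / (n : ℝ) ^ 2) (π ^ 2 / 6) := hasSum_zeta_two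
  rw [show π ^ 2 / 3 = π ^ 2 / 6 + π ^ 2 / 6 - 1 / ((0 : ℤ) : ℝ) ^ 2 by norm_num; ring]
  exact .of_nat_of_neg (by simpa using h) (by simpa using h)

section InverseSquareDistance

variable (p : ℤ → Prop) (n : ℤ)

theorem summable_one_div_sub_sq :
    Summable fun m : {m : ℤ // p m} => 1 / ((n : ℝ) - m) ^ 2 := by
  have hinj : Function.Injective fun m : {m : ℤ // p m} => n - (m : ℤ) :=
    fun a b h => Subtype.ext (by simpa using h)
  simpa [Function.comp_def] using hasSum_one_div_int_sq.summable.comp_injective hinj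

theorem tsum_one_div_sub_sq_le :
    ∑' m : {m : ℤ // p m}, 1 / ((n : ℝ) - m) ^ 2 ≤ π ^ 2 / 3 := by
  rw [← hasSum_one_div_int_sq.tsum_eq]
  refine Summable.tsum_le_tsum_of_inj (fun m : {m : ℤ // p m} => n - (m : ℤ))
    (fun a b h => Subtype.ext (by simpa using h)) (fun _ _ => by positivity) (fun m => ?_)
    (summable_one_div_sub_sq p n) hasSum_one_div_int_sq.summable
  push_cast
  rfl

theorem summable_one_div_weight_mul_sub_sq :
    Summable fun m : {m : ℤ // p m} => 1 / ((1 + |2 * (m : ℝ)|) ^ 2 * ((n : ℝ) - m) ^ 2) := by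
  refine (summable_one_div_sub_sq p n).of_nonneg_of_le (fun _ => by positivity) fun m => ?_
  rw [← one_div_mul_one_div]
  refine mul_le_of_le_one_left (by positivity) ?_
  rw [div_le_one (by positivity)]
  nlinarith [abs_nonneg (2 * (m : ℝ))]

end InverseSquareDistance

theorem one_add_abs_two_mul_add_two_le {N m : ℤ} (hN : 0 ≤ N) (hm : N < |m|) :
    1 + |2 * (N : ℝ) + 2| ≤ 1 + |2 * (m : ℝ)| := by
  have hm' : (N : ℝ) + 1 ≤ |(m : ℝ)| := by
    rw [← Int.cast_abs]
    exact_mod_cast hm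
  have hN' : (0 : ℝ) ≤ N := by exact_mod_cast hN
  rw [abs_of_nonneg (by linarith), abs_mul, abs_two]
  linarith

theorem tsum_one_div_weight_mul_sub_sq_le {N : ℤ} (hN : 0 ≤ N) (n : ℤ) :
    ∑' m : {m : ℤ // m ≠ n ∧ N < |m|}, 1 / ((1 + |2 * (m : ℝ)|) ^ 2 * ((n : ℝ) - m) ^ 2)
      ≤ 4 / (1 + |2 * (N : ℝ) + 2|) ^ 2 := by
  set W := 1 + |2 * (N : ℝ) + 2|
  have hterm : ∀ m : {m : ℤ // m ≠ n ∧ N < |m|},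
      1 / ((1 + |2 * (m : ℝ)|) ^ 2 * ((n : ℝ) - m) ^ 2) ≤ 1 / W ^ 2 * (1 / ((n : ℝ) - m) ^ 2) := by
    intro m
    have hnm : (n : ℝ) - m ≠ 0 := sub_ne_zero.mpr (by exact_mod_cast m.2.1.symm)
    rw [one_div_mul_one_div]
    gcongr
    exact one_add_abs_two_mul_add_two_le hN m.2.2
  have hsum := (summable_one_div_sub_sq (fun m => m ≠ n ∧ N < |m|) n).mul_left (1 / W ^ 2)
  calc _ ≤ ∑' m : {m : ℤ // m ≠ n ∧ N < |m|}, 1 / W ^ 2 * (1 / ((n : ℝ) - m) ^ 2) :=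
        (summable_one_div_weight_mul_sub_sq _ n).tsum_le_tsum hterm hsum
    _ = 1 / W ^ 2 * ∑' m : {m : ℤ // m ≠ n ∧ N < |m|}, 1 / ((n : ℝ) - m) ^ 2 := tsum_mul_left
    _ ≤ 1 / W ^ 2 * 4 := by
        gcongr
        exact (tsum_one_div_sub_sq_le _ n).trans (by nlinarith [pi_lt_d2, pi_pos])
    _ = 4 / W ^ 2 := by ring

theorem stmt_17_general (γ : ℤ → ℂ) (N : ℤ) (hN : 0 ≤ N)
    (hsum : Summable (fun m : {m : ℤ // N < |m|} =>
      (1 + |2 * ((m : ℤ) : ℝ)|) ^ 2 * ‖γ m‖ ^ 2))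
    (n : ℤ) :
    (∑' m : {m : ℤ // m ≠ n ∧ N < |m|}, ‖γ m‖ / |(n : ℝ) - m|)
      ≤ (2 / (1 + |2 * (N : ℝ) + 2|)) *
        Real.sqrt (∑' m : {m : ℤ // N < |m|},
          (1 + |2 * ((m : ℤ) : ℝ)|) ^ 2 * ‖γ m‖ ^ 2) := by
  set W := 1 + |2 * (N : ℝ) + 2|
  let f := fun m : {m : ℤ // m ≠ n ∧ N < |m|} => 1 / ((1 + |2 * (m : ℝ)|) * |(n : ℝ) - m|)
  let g := fun m : {m : ℤ // m ≠ n ∧ N < |m|} => (1 + |2 * (m : ℝ)|) * ‖γ m‖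
  have hfg : ∀ m, f m * g m = ‖γ m‖ / |(n : ℝ) - m| := fun m => by
    simp only [f, g]
    rw [one_div_mul_eq_div, mul_div_mul_left _ _ (by positivity)]
  have hf2 : ∀ m, f m ^ 2 = 1 / ((1 + |2 * (m : ℝ)|) ^ 2 * ((n : ℝ) - m) ^ 2) := fun m => by
    simp only [f]
    rw [div_pow, one_pow, mul_pow, sq_abs]
  have hg2 : ∀ m, g m ^ 2 = (1 + |2 * (m : ℝ)|) ^ 2 * ‖γ m‖ ^ 2 := fun m => mul_pow _ _ 2
  have hincl : Function.Injective
      fun m : {m : ℤ // m ≠ n ∧ N < |m|} => (⟨m, m.2.2⟩ : {m : ℤ // N < |m|}) :=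
    fun a b h => Subtype.ext (by simpa using congrArg Subtype.val h)
  have hf_le : √(∑' m, f m ^ 2) ≤ 2 / W := by
    rw [funext hf2, Real.sqrt_le_left (by positivity), div_pow]
    exact (tsum_one_div_weight_mul_sub_sq_le hN n).trans_eq (by norm_num [W])
  have hg_le : √(∑' m, g m ^ 2) ≤ √(∑' m : {m : ℤ // N < |m|},
      (1 + |2 * ((m : ℤ) : ℝ)|) ^ 2 * ‖γ m‖ ^ 2) := by
    rw [funext hg2]
    exact Real.sqrt_le_sqrt <| (hsum.comp_injective hincl).tsum_le_tsum_of_inj _ hincl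
      (fun _ _ => by positivity) (fun _ => le_rfl) hsum
  calc _ = ∑' m, f m * g m := tsum_congr fun m => (hfg m).symm
    _ ≤ √(∑' m, f m ^ 2) * √(∑' m, g m ^ 2) :=
        tsum_mul_le_sqrt_mul_sqrt (fun _ => by positivity) (fun _ => by positivity)
          (by simpa only [hf2] using summable_one_div_weight_mul_sub_sq _ n)
          ((hsum.comp_injective hincl).congr fun m => (hg2 m).symm)
    _ ≤ _ := mul_le_mul hf_le hg_le (Real.sqrt_nonneg _) (by positivity)

theorem stmt_17 (γ : ℤ → ℂ) (B : ℝ) (hB : 0 < B) (N : ℤ) (hN : 0 ≤ N)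
    (hγ : ∀ m : ℤ, N < |m| → ‖γ m‖ ≤ 4 * B / (1 + |2 * (m : ℝ)|))
    (hsum : Summable (fun m : {m : ℤ // N < |m|} =>
      (1 + |2 * ((m : ℤ) : ℝ)|) ^ 2 * ‖γ m‖ ^ 2))
    (n : ℤ) (hn : N < |n|) :
    (∑' m : {m : ℤ // m ≠ n ∧ N < |m|}, ‖γ m‖ / |(n : ℝ) - m|)
      ≤ (2 / (1 + |2 * (N : ℝ) + 2|)) *
        Real.sqrt (∑' m : {m : ℤ // N < |m|},
          (1 + |2 * ((m : ℤ) : ℝ)|) ^ 2 * ‖γ m‖ ^ 2) :=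
  stmt_17_general γ N hN hsum n
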